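/- arXiv:1711.06104 — 10 statements merged into one kernel-verified Lean document; each statement's English description precedes it below -/
import Mathlib

section
/- Let a feedforward network be given as in the context, with input x ∈ ℝ^{n_0} and target unit c. Assume every pre-activation is nonzero, i.e. z^(l)_j ≠ 0 for all l = 1,…,L and all j. Define unit-wise multipliers g^(l)_j = f(z^(l)_j) / z^(l)_j. Then for every input index i, the ε-LRP relevance of input feature i (computed with stabilizer ε = 0) equals the feature-wise product of the input with the modified partial derivative: r^(0)_i = x_i · ∂^g S_c/∂x_i. -/
/-- Forward pass of a feedforward network: `fwd n W b f x0 l` is the vector of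
activations `x^(l)` of layer `l`, with `fwd n W b f x0 0 = x0` and
`x^(l+1)_j = f (∑_i W^(l+1)_{ji} x^(l)_i + b^(l+1)_j)`. -/
noncomputable def fwd (n : ℕ → ℕ) (W : ∀ l, Fin (n (l + 1)) → Fin (n l) → ℝ)
    (b : ∀ l, Fin (n (l + 1)) → ℝ) (f : ℝ → ℝ) (x0 : Fin (n 0) → ℝ) :
    ∀ l, Fin (n l) → ℝ
  | 0 => x0
  | (l + 1) => fun j => f (∑ i, W l j i * fwd n W b f x0 l i + b l j)

/-- Pre-activations: `preact n W b f x0 l j` is `z^(l+1)_j = ∑_i W^(l+1)_{ji} x^(l)_i + b^(l+1)_j`. -/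
noncomputable def preact (n : ℕ → ℕ) (W : ∀ l, Fin (n (l + 1)) → Fin (n l) → ℝ)
    (b : ∀ l, Fin (n (l + 1)) → ℝ) (f : ℝ → ℝ) (x0 : Fin (n 0) → ℝ)
    (l : ℕ) (j : Fin (n (l + 1))) : ℝ :=
  ∑ i, W l j i * fwd n W b f x0 l i + b l j

/-- **Proposition 1 (ε-LRP as modified backpropagation).**
For a feedforward network with `L = M + 1 ≥ 1` layers, with all pre-activations nonzero,
let the unit-wise multipliers be `g^(l)_j = f(z^(l)_j) / z^(l)_j`.  Let `d` be the modified
backpropagation values computed with these multipliers (`d^(L)_j = if j = c then g^(L)_c else 0`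
and `d^(l)_j = g^(l)_j ⬝ ∑_k W^(l+1)_{kj} d^(l+1)_k` for `1 ≤ l < L`), and let `r` be the
ε-LRP relevances (with ε = 0).  Then the ε-LRP relevance of each input feature `i` equals
the product of the input with the modified partial derivative:
`r^(0)_i = x_i ⬝ ∂^g S_c/∂x_i = x_i ⬝ ∑_j W^(1)_{ji} d^(1)_j`. -/
theorem lrp_eq_input_times_modified_gradient
    (M : ℕ) (n : ℕ → ℕ)
    (W : ∀ l, Fin (n (l + 1)) → Fin (n l) → ℝ)
    (b : ∀ l, Fin (n (l + 1)) → ℝ)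
    (f : ℝ → ℝ) (x0 : Fin (n 0) → ℝ)
    (c : Fin (n (M + 1)))
    -- every pre-activation `z^(l)_j`, `l = 1, …, L`, is nonzero
    (hz : ∀ l, l < M + 1 → ∀ j : Fin (n (l + 1)), preact n W b f x0 l j ≠ 0)
    -- modified backpropagation with multipliers `g^(l)_j = f(z^(l)_j) / z^(l)_j`
    (d : ∀ l, Fin (n l) → ℝ)
    (hdTop : ∀ j : Fin (n (M + 1)),
      d (M + 1) j = if j = c then f (preact n W b f x0 M c) / preact n W b f x0 M c else 0)
    (hdRec : ∀ m, m < M → ∀ j : Fin (n (m + 1)),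
      d (m + 1) j = (f (preact n W b f x0 m j) / preact n W b f x0 m j) *
        ∑ k, W (m + 1) k j * d (m + 2) k)
    -- ε-LRP relevances with ε = 0
    (r : ∀ l, Fin (n l) → ℝ)
    (hrTop : ∀ j : Fin (n (M + 1)),
      r (M + 1) j = if j = c then fwd n W b f x0 (M + 1) j else 0)
    (hrRec : ∀ l, l < M + 1 → ∀ j : Fin (n l),
      r l j = ∑ k, (W l k j * fwd n W b f x0 l j / preact n W b f x0 l k) * r (l + 1) k) :
    ∀ i : Fin (n 0), r 0 i = x0 i * ∑ j, W 0 j i * d 1 j := by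
  have key : ∀ t m, m + t = M → ∀ j : Fin (n (m + 1)),
      r (m + 1) j = preact n W b f x0 m j * d (m + 1) j := by
    intro t
    induction t with
    | zero =>
      intro m hm j
      subst hm
      simp only [Nat.add_zero] at *
      rw [hrTop, hdTop]
      by_cases h : j = c
      · subst h
        rw [if_pos rfl, if_pos rfl]
        have hz' := hz m (Nat.lt_succ_self m) j
        have hf : fwd n W b f x0 (m + 1) j = f (preact n W b f x0 m j) := by
          simp [fwd, preact]
        rw [hf]
        field_simp
      · simp [h]
    | succ t ih =>
      intro m hm j
      have hmM : m < M := by omega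
      have hm1 : (m + 1) + t = M := by omega
      rw [hrRec (m + 1) (by omega) j]
      have hstep : ∀ k : Fin (n (m + 2)),
          (W (m + 1) k j * fwd n W b f x0 (m + 1) j / preact n W b f x0 (m + 1) k)
            * r (m + 2) k
          = fwd n W b f x0 (m + 1) j * (W (m + 1) k j * d (m + 2) k) := by
        intro k
        rw [ih (m + 1) hm1 k]
        have hzk := hz (m + 1) (by omega) k
        field_simp
      rw [Finset.sum_congr rfl (fun k _ => hstep k), ← Finset.mul_sum]
      rw [hdRec m hmM j]
      have hzj := hz m (by omega) j
      have hf : fwd n W b f x0 (m + 1) j = f (preact n W b f x0 m j) := by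
        simp [fwd, preact]
      rw [hf]
      field_simp
  intro i
  rw [hrRec 0 (by omega) i]
  have hstep : ∀ k : Fin (n 1),
      (W 0 k i * fwd n W b f x0 0 i / preact n W b f x0 0 k) * r 1 k
        = x0 i * (W 0 k i * d 1 k) := by
    intro k
    rw [key M 0 (by omega) k]
    have hzk := hz 0 (by omega) k
    have : fwd n W b f x0 0 i = x0 i := rfl
    rw [this]
    field_simp
  rw [Finset.sum_congr rfl (fun k _ => hstep k), ← Finset.mul_sum]
end

section
/- Let a feedforward network be given as in the context, with input x ∈ ℝ^{n_0}, baseline input x̄ ∈ ℝ^{n_0}, and target unit c. Assume z^(l)_j ≠ z̄^(l)_j for all l = 1,…,L and all j. Define unit-wise multipliers g^(l)_j = (f(z^(l)_j) − f(z̄^(l)_j)) / (z^(l)_j − z̄^(l)_j). Then for every input index i, the DeepLIFT (Rescale) relevance of input feature i equals the feature-wise product of the input difference with the modified partial derivative: r^(0)_i = (x_i − x̄_i) · ∂^g S_c/∂x_i. -/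
/-!
The Rescale multiplier of a unit is `Δf / Δz`, so the relevance a unit receives is its
pre-activation difference times its modified-backpropagation value: `r_k = Δz_k · d_k`.
Passing this through one DeepLIFT step, the `Δz_k` cancels against the denominator and leaves
`r_j = Δx_j · ∑_k W_{kj} d_k`; since `Δx_j = g_j Δz_j` and `d_j = g_j ∑_k W_{kj} d_k`, this is
again `Δz_j · d_j`, so the invariant propagates down to the input layer.
-/

theorem sum_rescale_eq_mul_sum {ι : Type*} [Fintype ι] (w Δz d r : ι → ℝ) (Δx : ℝ)
    (hΔz : ∀ k, Δz k ≠ 0) (hr : ∀ k, r k = Δz k * d k) :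
    ∑ k, w k * Δx / Δz k * r k = Δx * ∑ k, w k * d k := by
  rw [Finset.mul_sum]
  refine Finset.sum_congr rfl fun k _ => ?_
  rw [hr k]
  field_simp [hΔz k]

theorem fwd_succ_apply (n : ℕ → ℕ) (W : ∀ l, Fin (n (l + 1)) → Fin (n l) → ℝ)
    (b : ∀ l, Fin (n (l + 1)) → ℝ) (f : ℝ → ℝ) (x0 : Fin (n 0) → ℝ) (l : ℕ)
    (j : Fin (n (l + 1))) :
    fwd n W b f x0 (l + 1) j = f (preact n W b f x0 l j) :=
  rfl

theorem relevance_eq_preact_sub_mul_backprop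
    (M : ℕ) (n : ℕ → ℕ)
    (W : ∀ l, Fin (n (l + 1)) → Fin (n l) → ℝ)
    (b : ∀ l, Fin (n (l + 1)) → ℝ)
    (f : ℝ → ℝ) (x0 xb : Fin (n 0) → ℝ)
    (c : Fin (n (M + 1)))
    (hz : ∀ l, l < M + 1 → ∀ j : Fin (n (l + 1)),
      preact n W b f x0 l j ≠ preact n W b f xb l j)
    (d : ∀ l, Fin (n l) → ℝ)
    (hdTop : ∀ j : Fin (n (M + 1)),
      d (M + 1) j = if j = c then
        (f (preact n W b f x0 M c) - f (preact n W b f xb M c)) /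
          (preact n W b f x0 M c - preact n W b f xb M c) else 0)
    (hdRec : ∀ m, m < M → ∀ j : Fin (n (m + 1)),
      d (m + 1) j = ((f (preact n W b f x0 m j) - f (preact n W b f xb m j)) /
          (preact n W b f x0 m j - preact n W b f xb m j)) *
        ∑ k, W (m + 1) k j * d (m + 2) k)
    (r : ∀ l, Fin (n l) → ℝ)
    (hrTop : ∀ j : Fin (n (M + 1)),
      r (M + 1) j = if j = c then fwd n W b f x0 (M + 1) j - fwd n W b f xb (M + 1) j else 0)
    (hrRec : ∀ l, l < M + 1 → ∀ j : Fin (n l),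
      r l j = ∑ k, (W l k j * (fwd n W b f x0 l j - fwd n W b f xb l j) /
        (preact n W b f x0 l k - preact n W b f xb l k)) * r (l + 1) k)
    (l : ℕ) (hl : l ≤ M) (j : Fin (n (l + 1))) :
    r (l + 1) j = (preact n W b f x0 l j - preact n W b f xb l j) * d (l + 1) j := by
  induction hl using Nat.decreasingInduction with
  | self =>
    have hΔz := sub_ne_zero_of_ne (hz M (Nat.lt_succ_self M) j)
    rw [hrTop j, hdTop j]
    split_ifs with hjc
    · subst hjc
      rw [fwd_succ_apply, fwd_succ_apply, mul_div_cancel₀ _ hΔz]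
    · rw [mul_zero]
  | of_succ l hlM ih =>
    have hΔz := sub_ne_zero_of_ne (hz l (by omega) j)
    rw [hrRec (l + 1) (by omega) j,
      sum_rescale_eq_mul_sum _ _ _ _ _ (fun k => sub_ne_zero_of_ne (hz (l + 1) (by omega) k)) ih,
      hdRec l hlM j, fwd_succ_apply, fwd_succ_apply, ← mul_assoc, mul_div_cancel₀ _ hΔz]

/-- **Proposition 2 (DeepLIFT (Rescale) as modified backpropagation).**
For a feedforward network with `L = M + 1 ≥ 1` layers, input `x`, baseline `x̄` and target
unit `c`, assume `z^(l)_j ≠ z̄^(l)_j` for all `l = 1, …, L` and all `j`.  Let the unit-wise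
multipliers be `g^(l)_j = (f(z^(l)_j) - f(z̄^(l)_j)) / (z^(l)_j - z̄^(l)_j)`, let `d` be the
modified backpropagation values computed with these multipliers, and let `r` be the
DeepLIFT (Rescale) relevances.  Then the DeepLIFT relevance of each input feature `i`
equals `(x_i - x̄_i) ⬝ ∂^g S_c/∂x_i = (x_i - x̄_i) ⬝ ∑_j W^(1)_{ji} d^(1)_j`. -/
theorem deeplift_eq_inputdiff_times_modified_gradient
    (M : ℕ) (n : ℕ → ℕ)
    (W : ∀ l, Fin (n (l + 1)) → Fin (n l) → ℝ)
    (b : ∀ l, Fin (n (l + 1)) → ℝ)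
    (f : ℝ → ℝ) (x0 xb : Fin (n 0) → ℝ)
    (c : Fin (n (M + 1)))
    -- `z^(l)_j ≠ z̄^(l)_j` for all `l = 1, …, L` and all `j`
    (hz : ∀ l, l < M + 1 → ∀ j : Fin (n (l + 1)),
      preact n W b f x0 l j ≠ preact n W b f xb l j)
    -- modified backpropagation with multipliers
    -- `g^(l)_j = (f(z^(l)_j) - f(z̄^(l)_j)) / (z^(l)_j - z̄^(l)_j)`
    (d : ∀ l, Fin (n l) → ℝ)
    (hdTop : ∀ j : Fin (n (M + 1)),
      d (M + 1) j = if j = c then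
        (f (preact n W b f x0 M c) - f (preact n W b f xb M c)) /
          (preact n W b f x0 M c - preact n W b f xb M c) else 0)
    (hdRec : ∀ m, m < M → ∀ j : Fin (n (m + 1)),
      d (m + 1) j = ((f (preact n W b f x0 m j) - f (preact n W b f xb m j)) /
          (preact n W b f x0 m j - preact n W b f xb m j)) *
        ∑ k, W (m + 1) k j * d (m + 2) k)
    -- DeepLIFT (Rescale) relevances
    (r : ∀ l, Fin (n l) → ℝ)
    (hrTop : ∀ j : Fin (n (M + 1)),
      r (M + 1) j = if j = c then fwd n W b f x0 (M + 1) j - fwd n W b f xb (M + 1) j else 0)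
    (hrRec : ∀ l, l < M + 1 → ∀ j : Fin (n l),
      r l j = ∑ k, (W l k j * (fwd n W b f x0 l j - fwd n W b f xb l j) /
        (preact n W b f x0 l k - preact n W b f xb l k)) * r (l + 1) k) :
    ∀ i : Fin (n 0), r 0 i = (x0 i - xb i) * ∑ j, W 0 j i * d 1 j := fun i =>
  calc r 0 i
      = ∑ k, W 0 k i * (x0 i - xb i) / (preact n W b f x0 0 k - preact n W b f xb 0 k) *
          r 1 k := hrRec 0 (Nat.succ_pos M) i
    _ = (x0 i - xb i) * ∑ j, W 0 j i * d 1 j :=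
      sum_rescale_eq_mul_sum _ _ _ _ _ (fun k => sub_ne_zero_of_ne (hz 0 (Nat.succ_pos M) k))
        (relevance_eq_preact_sub_mul_backprop M n W b f x0 xb c hz d hdTop hdRec r hrTop hrRec 0
          (Nat.zero_le M))
end

section
/- Let a feedforward network be given as in the context with nonlinearity f(z) = max(0, z) (ReLU), input x ∈ ℝ^{n_0} and target unit c, and assume z^(l)_j ≠ 0 for all l, j. Then for every input index i, the ε-LRP relevance (with ε = 0) equals the Gradient * Input attribution: r^(0)_i = x_i · ∂^g S_c/∂x_i, where the multipliers are the ReLU derivatives g^(l)_j = (if 0 < z^(l)_j then 1 else 0). -/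
/-- **ε-LRP = Gradient * Input for ReLU networks.**
For a feedforward network with `L = M + 1 ≥ 1` layers whose nonlinearity is
`ReLU(z) = max 0 z`, with all pre-activations nonzero, let `d` be the (modified)
backpropagation values computed with the ReLU derivatives
`g^(l)_j = if 0 < z^(l)_j then 1 else 0` as multipliers, and let `r` be the ε-LRP
relevances (with ε = 0).  Then for every input index `i`, the ε-LRP relevance equals
the Gradient * Input attribution: `r^(0)_i = x_i ⬝ ∑_j W^(1)_{ji} d^(1)_j`. -/
theorem lrp_eq_gradient_times_input_relu
    (M : ℕ) (n : ℕ → ℕ)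
    (W : ∀ l, Fin (n (l + 1)) → Fin (n l) → ℝ)
    (b : ∀ l, Fin (n (l + 1)) → ℝ)
    (x0 : Fin (n 0) → ℝ)
    (c : Fin (n (M + 1)))
    -- every pre-activation `z^(l)_j`, `l = 1, …, L`, is nonzero
    (hz : ∀ l, l < M + 1 → ∀ j : Fin (n (l + 1)),
      preact n W b (fun z => max 0 z) x0 l j ≠ 0)
    -- backpropagation with the ReLU derivatives as multipliers:
    -- `g^(l)_j = if 0 < z^(l)_j then 1 else 0`
    (d : ∀ l, Fin (n l) → ℝ)
    (hdTop : ∀ j : Fin (n (M + 1)),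
      d (M + 1) j = if j = c then
        (if 0 < preact n W b (fun z => max 0 z) x0 M c then (1 : ℝ) else 0) else 0)
    (hdRec : ∀ m, m < M → ∀ j : Fin (n (m + 1)),
      d (m + 1) j = (if 0 < preact n W b (fun z => max 0 z) x0 m j then (1 : ℝ) else 0) *
        ∑ k, W (m + 1) k j * d (m + 2) k)
    -- ε-LRP relevances with ε = 0
    (r : ∀ l, Fin (n l) → ℝ)
    (hrTop : ∀ j : Fin (n (M + 1)),
      r (M + 1) j = if j = c then fwd n W b (fun z => max 0 z) x0 (M + 1) j else 0)
    (hrRec : ∀ l, l < M + 1 → ∀ j : Fin (n l),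
      r l j = ∑ k, (W l k j * fwd n W b (fun z => max 0 z) x0 l j /
        preact n W b (fun z => max 0 z) x0 l k) * r (l + 1) k) :
    ∀ i : Fin (n 0), r 0 i = x0 i * ∑ j, W 0 j i * d 1 j := by
  set f : ℝ → ℝ := fun z => max 0 z with hf
  have hfwd : ∀ l (j : Fin (n (l + 1))),
      fwd n W b f x0 (l + 1) j = max 0 (preact n W b f x0 l j) := fun l j => rfl
  have habs : ∀ l, l < M + 1 → ∀ k : Fin (n (l + 1)),
      (if 0 < preact n W b f x0 l k then (1 : ℝ) else 0) * d (l + 1) k = d (l + 1) k := by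
    intro l hl k
    rcases Nat.lt_or_ge l M with h | h
    · rw [hdRec l h k, ← mul_assoc]
      by_cases hp : 0 < preact n W b f x0 l k <;> simp [hp]
    · have hlM : l = M := by omega
      subst hlM
      rw [hdTop k]
      by_cases hk : k = c
      · subst hk
        by_cases hp : 0 < preact n W b f x0 l k <;> simp [hp]
      · simp [hk]
  have hX : ∀ l, l < M + 1 → ∀ k : Fin (n (l + 1)),
      fwd n W b f x0 (l + 1) k / preact n W b f x0 l k
        = if 0 < preact n W b f x0 l k then (1 : ℝ) else 0 := by
    intro l hl k
    have hne := hz l hl k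
    rw [hfwd]
    by_cases hp : 0 < preact n W b f x0 l k
    · rw [max_eq_right hp.le, div_self hne, if_pos hp]
    · have hneg : preact n W b f x0 l k < 0 := lt_of_le_of_ne (not_lt.1 hp) hne
      rw [max_eq_left hneg.le, zero_div, if_neg hp]
  have key : ∀ k l, l + k = M + 1 → 1 ≤ l → ∀ j : Fin (n l),
      r l j = fwd n W b f x0 l j * d l j := by
    intro k
    induction k with
    | zero =>
      intro l hl _ j
      have hlM : l = M + 1 := by omega
      subst hlM
      rw [hrTop j, hdTop j, hfwd]
      by_cases hj : j = c
      · subst hj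
        by_cases hp : 0 < preact n W b f x0 M j
        · simp [hp]
        · have hneg : preact n W b f x0 M j < 0 :=
            lt_of_le_of_ne (not_lt.1 hp) (hz M (by omega) j)
          simp [hp, max_eq_left hneg.le]
      · simp [hj]
    | succ k ih =>
      intro l hl h1 j
      obtain ⟨m, rfl⟩ : ∃ m, l = m + 1 := ⟨l - 1, by omega⟩
      have hlM : m + 1 < M + 1 := by omega
      rw [hrRec (m + 1) hlM j]
      have step : ∀ kk : Fin (n (m + 2)),
          (W (m + 1) kk j * fwd n W b f x0 (m + 1) j / preact n W b f x0 (m + 1) kk)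
              * r (m + 2) kk
            = fwd n W b f x0 (m + 1) j * (W (m + 1) kk j * d (m + 2) kk) := by
        intro kk
        rw [ih (m + 2) (by omega) (by omega) kk]
        have hring : (W (m + 1) kk j * fwd n W b f x0 (m + 1) j /
              preact n W b f x0 (m + 1) kk)
              * (fwd n W b f x0 (m + 2) kk * d (m + 2) kk)
            = fwd n W b f x0 (m + 1) j * (W (m + 1) kk j *
              ((fwd n W b f x0 (m + 2) kk / preact n W b f x0 (m + 1) kk)
                * d (m + 2) kk)) := by ring
        rw [hring, hX (m + 1) hlM kk, habs (m + 1) hlM kk]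
      calc (∑ kk, (W (m + 1) kk j * fwd n W b f x0 (m + 1) j /
              preact n W b f x0 (m + 1) kk) * r (m + 2) kk)
          = ∑ kk, fwd n W b f x0 (m + 1) j * (W (m + 1) kk j * d (m + 2) kk) :=
            Finset.sum_congr rfl (fun kk _ => step kk)
        _ = fwd n W b f x0 (m + 1) j * ∑ kk, W (m + 1) kk j * d (m + 2) kk := by
            rw [Finset.mul_sum]
        _ = fwd n W b f x0 (m + 1) j * d (m + 1) j := by
            rw [hdRec m (by omega) j, ← mul_assoc]
            by_cases hp : 0 < preact n W b f x0 m j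
            · simp [hp]
            · have hneg : preact n W b f x0 m j < 0 :=
                lt_of_le_of_ne (not_lt.1 hp) (hz m (by omega) j)
              rw [hfwd]
              simp [hp, max_eq_left hneg.le]
  intro i
  rw [hrRec 0 (by omega) i]
  have step : ∀ k : Fin (n 1),
      (W 0 k i * fwd n W b f x0 0 i / preact n W b f x0 0 k) * r 1 k
        = x0 i * (W 0 k i * d 1 k) := by
    intro k
    rw [key M 1 (by omega) (by omega) k]
    have hring : (W 0 k i * fwd n W b f x0 0 i / preact n W b f x0 0 k)
          * (fwd n W b f x0 1 k * d 1 k)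
        = fwd n W b f x0 0 i * (W 0 k i *
          ((fwd n W b f x0 1 k / preact n W b f x0 0 k) * d 1 k)) := by ring
    rw [hring, hX 0 (by omega) k, habs 0 (by omega) k]
    rfl
  calc (∑ k, (W 0 k i * fwd n W b f x0 0 i / preact n W b f x0 0 k) * r 1 k)
      = ∑ k, x0 i * (W 0 k i * d 1 k) := Finset.sum_congr rfl (fun k _ => step k)
    _ = x0 i * ∑ k, W 0 k i * d 1 k := by rw [Finset.mul_sum]
end

section
/- Let a feedforward network be given as in the context with all additive biases zero (b^(l) = 0 for every l) and with a nonlinearity f : ℝ → ℝ satisfying f(0) = 0. Fix an input x ∈ ℝ^{n_0} with z^(l)_j ≠ 0 for all l, j, a target unit c, and take the DeepLIFT baseline x̄ = 0. Then for every input index i, the DeepLIFT (Rescale) relevance of feature i equals its ε-LRP relevance (with ε = 0): the two backward recursions produce identical values r^(0)_i. -/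
/-- **DeepLIFT (zero baseline) = ε-LRP for bias-free networks with `f 0 = 0`.**
For a feedforward network with `L = M + 1 ≥ 1` layers, no additive biases (`b = 0`) and a
nonlinearity with `f 0 = 0`, fix an input `x` with all pre-activations nonzero and take the
DeepLIFT baseline `x̄ = 0`.  Let `rDL` be the DeepLIFT (Rescale) relevances and `rLRP` the
ε-LRP relevances (with ε = 0).  Then the two backward recursions produce identical input
attributions: `rDL^(0)_i = rLRP^(0)_i` for every input index `i`. -/
theorem deeplift_zero_baseline_eq_lrp
    (M : ℕ) (n : ℕ → ℕ)
    (W : ∀ l, Fin (n (l + 1)) → Fin (n l) → ℝ)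
    (b : ∀ l, Fin (n (l + 1)) → ℝ)
    (hb : ∀ l, ∀ j : Fin (n (l + 1)), b l j = 0)  -- no additive biases
    (f : ℝ → ℝ) (hf : f 0 = 0)                     -- nonlinearity crosses the origin
    (x0 : Fin (n 0) → ℝ)
    (c : Fin (n (M + 1)))
    -- every pre-activation `z^(l)_j`, `l = 1, …, L`, is nonzero
    (hz : ∀ l, l < M + 1 → ∀ j : Fin (n (l + 1)), preact n W b f x0 l j ≠ 0)
    -- DeepLIFT (Rescale) relevances with the zero baseline `x̄ = 0`
    (rDL : ∀ l, Fin (n l) → ℝ)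
    (hrDLTop : ∀ j : Fin (n (M + 1)),
      rDL (M + 1) j = if j = c then
        fwd n W b f x0 (M + 1) j - fwd n W b f (fun _ => 0) (M + 1) j else 0)
    (hrDLRec : ∀ l, l < M + 1 → ∀ j : Fin (n l),
      rDL l j = ∑ k, (W l k j * (fwd n W b f x0 l j - fwd n W b f (fun _ => 0) l j) /
        (preact n W b f x0 l k - preact n W b f (fun _ => 0) l k)) * rDL (l + 1) k)
    -- ε-LRP relevances with ε = 0
    (rLRP : ∀ l, Fin (n l) → ℝ)
    (hrLRPTop : ∀ j : Fin (n (M + 1)),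
      rLRP (M + 1) j = if j = c then fwd n W b f x0 (M + 1) j else 0)
    (hrLRPRec : ∀ l, l < M + 1 → ∀ j : Fin (n l),
      rLRP l j = ∑ k, (W l k j * fwd n W b f x0 l j / preact n W b f x0 l k) *
        rLRP (l + 1) k) :
    ∀ i : Fin (n 0), rDL 0 i = rLRP 0 i := by
  -- baseline forward pass is identically zero
  have hfwd0 : ∀ l (j : Fin (n l)), fwd n W b f (fun _ => 0) l j = 0 := by
    intro l
    induction l with
    | zero => intro j; rfl
    | succ l ih =>
      intro j
      show f (∑ i, W l j i * fwd n W b f (fun _ => 0) l i + b l j) = 0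
      simp [ih, hb, hf]
  have hpre0 : ∀ l (j : Fin (n (l + 1))), preact n W b f (fun _ => 0) l j = 0 := by
    intro l j
    simp [preact, hfwd0, hb]
  -- downward induction
  have main : ∀ d l, l + d = M + 1 → ∀ j : Fin (n l), rDL l j = rLRP l j := by
    intro d
    induction d with
    | zero =>
      intro l hl j
      have : l = M + 1 := by omega
      subst this
      rw [hrDLTop j, hrLRPTop j, hfwd0]
      ring_nf
    | succ d ih =>
      intro l hl j
      have hlt : l < M + 1 := by omega
      rw [hrDLRec _ hlt j, hrLRPRec _ hlt j]
      apply Finset.sum_congr rfl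
      intro k _
      rw [ih (l + 1) (by omega) k, hfwd0, hpre0]
      ring_nf
  intro i
  exact main (M + 1) 0 (by omega) i
end

section
/- Let S : (Fin N → ℝ) → ℝ and suppose R : (Fin N → ℝ) → (Fin N → ℝ) is an attribution map satisfying both Sensitivity-1 and Sensitivity-2 for S: for all x and all i, R_i(x) = S(x) − S(x_{[x_i=0]}), and for all x and all i ≠ j, R_i(x) + R_j(x) = S(x) − S(x_{[x_i=0, x_j=0]}). Then S satisfies the modularity identity: for all x and all i ≠ j, S(x) + S(x_{[x_i=0, x_j=0]}) = S(x_{[x_i=0]}) + S(x_{[x_j=0]}). Consequently, if S violates this identity for some x, i, j, no attribution map can satisfy both Sensitivity-1 and Sensitivity-2. -/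
/-- **Sensitivity-1 together with Sensitivity-2 forces modularity.**
If an attribution map `R` satisfies Sensitivity-1 (`R i x = S(x) - S(x_{[x_i=0]})`) and
Sensitivity-2 (`R i x + R j x = S(x) - S(x_{[x_i=0, x_j=0]})` for `i ≠ j`), then the model
`S` satisfies the modularity identity
`S(x) + S(x_{[x_i=0, x_j=0]}) = S(x_{[x_i=0]}) + S(x_{[x_j=0]})` for all `x` and `i ≠ j`.
(Consequently, if `S` violates this identity, no attribution map can satisfy both
Sensitivity-1 and Sensitivity-2.) -/
theorem sensitivity_one_and_two_imply_modularity
    (N : ℕ) (S : (Fin N → ℝ) → ℝ)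
    (R : (Fin N → ℝ) → Fin N → ℝ)
    -- Sensitivity-1
    (h1 : ∀ (x : Fin N → ℝ) (i : Fin N), R x i = S x - S (Function.update x i 0))
    -- Sensitivity-2
    (h2 : ∀ (x : Fin N → ℝ) (i j : Fin N), i ≠ j →
      R x i + R x j = S x - S (Function.update (Function.update x i 0) j 0)) :
    ∀ (x : Fin N → ℝ) (i j : Fin N), i ≠ j →
      S x + S (Function.update (Function.update x i 0) j 0) =
        S (Function.update x i 0) + S (Function.update x j 0) := by
  intro x i j hij
  have := h2 x i j hij
  rw [h1 x i, h1 x j] at this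
  linarith
end

section
/- Let S : (Fin N → ℝ) → ℝ satisfy the modularity identity: for all x and all i ≠ j, S(x) + S(x_{[x_i=0, x_j=0]}) = S(x_{[x_i=0]}) + S(x_{[x_j=0]}). Then S is additively separable across features: for every x, S(x) = S(0) + ∑_{i} (S(δ_i(x)) − S(0)), where δ_i(x) denotes the vector whose i-th coordinate is x_i and whose other coordinates are 0. -/
lemma modularity_aux
    (N : ℕ) (S : (Fin N → ℝ) → ℝ)
    (hmod : ∀ (x : Fin N → ℝ) (i j : Fin N), i ≠ j →
      S x + S (Function.update (Function.update x i 0) j 0) =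
        S (Function.update x i 0) + S (Function.update x j 0)) :
    ∀ (s : Finset (Fin N)) (j : Fin N), j ∉ s →
      ∀ x : Fin N → ℝ, (∀ i, i ≠ j → i ∉ s → x i = 0) →
      S x - S (Function.update x j 0) = S (Pi.single j (x j)) - S 0 := by
  intro s
  induction s using Finset.induction with
  | empty =>
    intro j _ x hx
    have h1 : x = Pi.single j (x j) := by
      funext i
      by_cases h : i = j
      · subst h; simp
      · simp [Pi.single_eq_of_ne h, hx i h (Finset.notMem_empty i)]
    have h2 : Function.update x j 0 = 0 := by
      funext i
      by_cases h : i = j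
      · subst h; simp
      · simp [Function.update_of_ne h, hx i h (Finset.notMem_empty i)]
    rw [h2, ← h1]
  | @insert a s ha ih =>
    intro j hj x hx
    have hja : j ≠ a := fun h => hj (h ▸ Finset.mem_insert_self a s)
    have hjs : j ∉ s := fun h => hj (Finset.mem_insert_of_mem h)
    have hm := hmod x j a hja
    have hcomm : Function.update (Function.update x j 0) a 0 =
        Function.update (Function.update x a 0) j 0 :=
      Function.update_comm hja 0 0 x
    have key : S x - S (Function.update x j 0) =
        S (Function.update x a 0) -
          S (Function.update (Function.update x a 0) j 0) := by
      rw [← hcomm]; linarith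
    rw [key]
    have hx' : ∀ i, i ≠ j → i ∉ s → (Function.update x a 0) i = 0 := by
      intro i hij his
      by_cases h : i = a
      · subst h; simp
      · rw [Function.update_of_ne h]
        exact hx i hij (by simp [his, h])
    have hupd : (Function.update x a 0) j = x j := Function.update_of_ne hja 0 x
    rw [ih j hjs (Function.update x a 0) hx', hupd]

lemma modularity_key
    (N : ℕ) (S : (Fin N → ℝ) → ℝ)
    (hmod : ∀ (x : Fin N → ℝ) (i j : Fin N), i ≠ j →
      S x + S (Function.update (Function.update x i 0) j 0) =
        S (Function.update x i 0) + S (Function.update x j 0)) :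
    ∀ (x : Fin N → ℝ) (j : Fin N),
      S x - S (Function.update x j 0) = S (Pi.single j (x j)) - S 0 := by
  intro x j
  refine modularity_aux N S hmod (Finset.univ.erase j) j (Finset.notMem_erase j _) x ?_
  intro i hij his
  exact absurd (Finset.mem_erase.mpr ⟨hij, Finset.mem_univ i⟩) his

/-- **Modularity implies additive separability across features.**
If `S : (Fin N → ℝ) → ℝ` satisfies the modularity identity
`S(x) + S(x_{[x_i=0, x_j=0]}) = S(x_{[x_i=0]}) + S(x_{[x_j=0]})` for all `x` and `i ≠ j`,
then `S` is additively separable: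
`S(x) = S(0) + ∑ i, (S(δ_i(x)) - S(0))`, where `δ_i(x)` is the vector whose `i`-th
coordinate is `x i` and whose other coordinates are `0`. -/
theorem modularity_implies_additive_separability
    (N : ℕ) (S : (Fin N → ℝ) → ℝ)
    (hmod : ∀ (x : Fin N → ℝ) (i j : Fin N), i ≠ j →
      S x + S (Function.update (Function.update x i 0) j 0) =
        S (Function.update x i 0) + S (Function.update x j 0)) :
    ∀ x : Fin N → ℝ,
      S x = S 0 + ∑ i, (S (Pi.single i (x i)) - S 0) := by
  have main : ∀ (s : Finset (Fin N)) (x : Fin N → ℝ), (∀ i ∉ s, x i = 0) →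
      S x = S 0 + ∑ i ∈ s, (S (Pi.single i (x i)) - S 0) := by
    intro s
    induction s using Finset.induction with
    | empty =>
      intro x hx
      have : x = 0 := by
        funext i; exact hx i (Finset.notMem_empty i)
      simp [this]
    | @insert a s ha ih =>
      intro x hx
      have hkey := modularity_key N S hmod x a
      have hx' : ∀ i ∉ s, (Function.update x a 0) i = 0 := by
        intro i his
        by_cases h : i = a
        · subst h; simp
        · rw [Function.update_of_ne h]
          exact hx i (by simp [his, h])
      have hih := ih (Function.update x a 0) hx'
      have hsum : ∑ i ∈ s, (S (Pi.single i ((Function.update x a 0) i)) - S 0) =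
          ∑ i ∈ s, (S (Pi.single i (x i)) - S 0) := by
        refine Finset.sum_congr rfl fun i hi => ?_
        rw [Function.update_of_ne (fun h => ha (by rwa [h] at hi)) 0 x]
      rw [Finset.sum_insert ha]
      rw [hsum] at hih
      linarith
  intro x
  exact main Finset.univ x (fun i hi => absurd (Finset.mem_univ i) hi)
end

section
/- Let f : ℝ → ℝ be continuously differentiable, w ∈ Fin N → ℝ, b ∈ ℝ, and define the single-nonlinearity model S(x) = f(∑_i w_i x_i + b). Fix an input x and baseline x̄ with z := ∑_i w_i x_i + b ≠ z̄ := ∑_i w_i x̄_i + b. Then for every index i, the DeepLIFT (Rescale) attribution equals the Integrated Gradients attribution exactly: (x_i − x̄_i) · w_i · (f(z) − f(z̄))/(z − z̄) = (x_i − x̄_i) · ∫_0^1 f'(z̄ + α(z − z̄)) · w_i dα. -/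
open intervalIntegral

theorem integral_deriv_comp_affine_eq_div_sub {f : ℝ → ℝ} {a b : ℝ} (hab : a ≠ b)
    (hf : ∀ x ∈ Set.uIcc a b, DifferentiableAt ℝ f x)
    (hf' : IntervalIntegrable (deriv f) MeasureTheory.volume a b) :
    ∫ t in (0:ℝ)..1, deriv f (a + t * (b - a)) = (f b - f a) / (b - a) := by
  have hba : b - a ≠ 0 := sub_ne_zero.mpr hab.symm
  simp_rw [mul_comm _ (b - a)]
  rw [integral_comp_add_mul _ hba, mul_zero, mul_one, add_zero, add_sub_cancel,
    integral_deriv_eq_sub hf hf', smul_eq_mul, inv_mul_eq_div]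

theorem deeplift_eq_integrated_gradients_single_nonlinearity_general
    (N : ℕ) (f : ℝ → ℝ) (hf : ContDiff ℝ 1 f)
    (w : Fin N → ℝ) (x xb : Fin N → ℝ)
    (z zb : ℝ)
    (hne : z ≠ zb) :
    ∀ i : Fin N,
      (x i - xb i) * w i * ((f z - f zb) / (z - zb)) =
        (x i - xb i) * ∫ α in (0:ℝ)..1, deriv f (zb + α * (z - zb)) * w i := by
  intro i
  have hf' : Continuous (deriv f) := hf.continuous_deriv le_rfl
  rw [integral_mul_const, integral_deriv_comp_affine_eq_div_sub hne.symm
    (fun x _ => hf.differentiable one_ne_zero x) (hf'.intervalIntegrable _ _)]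
  ring

/-- **DeepLIFT (Rescale) equals Integrated Gradients on a single-nonlinearity model.**
For the model `S(x) = f (∑ i, w i * x i + b)` with `f` continuously differentiable, an
input `x` and a baseline `x̄` whose pre-activations `z = ∑ i, w i * x i + b` and
`z̄ = ∑ i, w i * x̄ i + b` differ, the DeepLIFT (Rescale) attribution of every feature
equals its Integrated Gradients attribution:
`(x_i - x̄_i) ⬝ w_i ⬝ (f(z) - f(z̄))/(z - z̄) = (x_i - x̄_i) ⬝ ∫_0^1 f'(z̄ + α(z - z̄)) ⬝ w_i dα`. -/
theorem deeplift_eq_integrated_gradients_single_nonlinearity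
    (N : ℕ) (f : ℝ → ℝ) (hf : ContDiff ℝ 1 f)
    (w : Fin N → ℝ) (b : ℝ) (x xb : Fin N → ℝ)
    (z zb : ℝ)
    (hz : z = ∑ i, w i * x i + b) (hzb : zb = ∑ i, w i * xb i + b)
    (hne : z ≠ zb) :
    ∀ i : Fin N,
      (x i - xb i) * w i * ((f z - f zb) / (z - zb)) =
        (x i - xb i) * ∫ α in (0:ℝ)..1, deriv f (zb + α * (z - zb)) * w i :=
  deeplift_eq_integrated_gradients_single_nonlinearity_general N f hf w x xb z zb hne
end

section
/- Define h : ℝ × ℝ → ℝ by h(x₁, x₂) = max(0, x₁ − 1) · max(0, x₂). For all x₁ > 1 and x₂ > 0, the DeepLIFT (Rescale) attributions with zero baseline, computed by the modified chain rule through the product (the Rescale multiplier of the first ReLU being max(0, x₁ − 1)/x₁ and of the second max(0, x₂)/x₂, and each factor of the product contributing the other factor's value as the product's partial derivative), are R₁ = x₁ · (max(0, x₁ − 1)/x₁) · max(0, x₂) and R₂ = x₂ · (max(0, x₂)/x₂) · max(0, x₁ − 1); these satisfy R₁ + R₂ = 2·h(x₁, x₂) ≠ h(x₁, x₂) − h(0,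 0), so DeepLIFT violates Completeness on this model with multiplicative interactions. -/
/-- The product model `h(x₁, x₂) = max(0, x₁ - 1) · max(0, x₂)`. -/
noncomputable def prodModel (x₁ x₂ : ℝ) : ℝ := max 0 (x₁ - 1) * max 0 x₂

/-- **DeepLIFT (Rescale) violates Completeness on a model with multiplicative
interactions.**  For `h(x₁, x₂) = max(0, x₁ - 1) · max(0, x₂)`, all `x₁ > 1` and
`x₂ > 0`, the DeepLIFT (Rescale) attributions with zero baseline, computed by the
modified chain rule through the product (the Rescale multiplier of the first ReLU being
`max(0, x₁ - 1)/x₁`, that of the second `max(0, x₂)/x₂`, and each factor of the product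
contributing the other factor's value as the product's partial derivative), are
`R₁ = x₁ · (max(0, x₁ - 1)/x₁) · max(0, x₂)` and `R₂ = x₂ · (max(0, x₂)/x₂) · max(0, x₁ - 1)`;
they satisfy `R₁ + R₂ = 2·h(x₁, x₂) ≠ h(x₁, x₂) - h(0, 0)`. -/
theorem deeplift_violates_completeness_product_model :
    ∀ x₁ x₂ : ℝ, 1 < x₁ → 0 < x₂ →
      (x₁ * (max 0 (x₁ - 1) / x₁) * max 0 x₂ +
        x₂ * (max 0 x₂ / x₂) * max 0 (x₁ - 1)
        = 2 * prodModel x₁ x₂) ∧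
      2 * prodModel x₁ x₂ ≠ prodModel x₁ x₂ - prodModel 0 0 := by
  intro x₁ x₂ h1 h2
  have hx1 : (0:ℝ) < x₁ := lt_trans one_pos h1
  have m1 : max 0 (x₁ - 1) = x₁ - 1 := max_eq_right (by linarith)
  have m2 : max 0 x₂ = x₂ := max_eq_right h2.le
  have hsub : (0:ℝ) < x₁ - 1 := by linarith
  constructor
  · rw [prodModel, m1, m2]
    field_simp
    ring
  · rw [prodModel, prodModel, m1, m2]
    simp only [max_self]
    have hpos : 0 < (x₁ - 1) * x₂ := mul_pos hsub h2
    intro h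
    nlinarith
end

section
/- Let a feedforward network be given as in the context with all additive biases zero (b^(l) = 0 for every l), input x ∈ ℝ^{n_0} and target unit c, and assume z^(l)_j ≠ 0 for all l, j. Then the ε-LRP relevances (with ε = 0) are conserved across layers: for every l = 0,…,L, ∑_j r^(l)_j = S_c(x); in particular the input attributions sum to the target output, ∑_i r^(0)_i = S_c(x). -/
/-- **Relevance conservation for ε-LRP in bias-free networks.**
For a feedforward network with `L = M + 1 ≥ 1` layers, no additive biases (`b = 0`),
input `x`, target unit `c`, and all pre-activations nonzero, the ε-LRP relevances
(with ε = 0) are conserved across layers: for every `l = 0, …, L`,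
`∑_j r^(l)_j = S_c(x)`; in particular `∑_i r^(0)_i = S_c(x)`. -/
theorem lrp_relevance_conservation
    (M : ℕ) (n : ℕ → ℕ)
    (W : ∀ l, Fin (n (l + 1)) → Fin (n l) → ℝ)
    (b : ∀ l, Fin (n (l + 1)) → ℝ)
    (hb : ∀ l, ∀ j : Fin (n (l + 1)), b l j = 0)  -- no additive biases
    (f : ℝ → ℝ) (x0 : Fin (n 0) → ℝ)
    (c : Fin (n (M + 1)))
    -- every pre-activation `z^(l)_j`, `l = 1, …, L`, is nonzero
    (hz : ∀ l, l < M + 1 → ∀ j : Fin (n (l + 1)), preact n W b f x0 l j ≠ 0)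
    -- ε-LRP relevances with ε = 0
    (r : ∀ l, Fin (n l) → ℝ)
    (hrTop : ∀ j : Fin (n (M + 1)),
      r (M + 1) j = if j = c then fwd n W b f x0 (M + 1) j else 0)
    (hrRec : ∀ l, l < M + 1 → ∀ j : Fin (n l),
      r l j = ∑ k, (W l k j * fwd n W b f x0 l j / preact n W b f x0 l k) * r (l + 1) k) :
    ∀ l, l ≤ M + 1 → ∑ j, r l j = fwd n W b f x0 (M + 1) c := by
  have hTop : ∑ j, r (M + 1) j = fwd n W b f x0 (M + 1) c := by
    simp [hrTop]
  have step : ∀ l, l < M + 1 → ∑ j, r l j = ∑ k, r (l + 1) k := by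
    intro l hl
    rw [Finset.sum_congr rfl (fun j _ => hrRec l hl j), Finset.sum_comm]
    refine Finset.sum_congr rfl fun k _ => ?_
    have hzk := hz l hl k
    have hsum : ∑ j, W l k j * fwd n W b f x0 l j = preact n W b f x0 l k := by
      simp [preact, hb]
    simp only [div_mul_eq_mul_div, ← Finset.sum_div, ← Finset.sum_mul, hsum]
    field_simp
  have aux : ∀ d, d ≤ M + 1 → ∑ j, r (M + 1 - d) j = fwd n W b f x0 (M + 1) c := by
    intro d
    induction d with
    | zero => simpa using hTop
    | succ d ih =>
      intro hd
      have hlt : M + 1 - (d + 1) < M + 1 := by omega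
      rw [step _ hlt]
      have he : M + 1 - (d + 1) + 1 = M + 1 - d := by omega
      rw [he]
      exact ih (by omega)
  intro l hl
  have := aux (M + 1 - l) (by omega)
  have he : M + 1 - (M + 1 - l) = l := by omega
  rwa [he] at this
end

section
/- Let a feedforward network be given as in the context, with input x ∈ ℝ^{n_0}, baseline x̄ ∈ ℝ^{n_0}, and target unit c, and assume z^(l)_j ≠ z̄^(l)_j for all l = 1,…,L and all j. Then the DeepLIFT (Rescale) relevances satisfy Completeness (Summation to Delta) at every layer: for every l = 0,…,L, ∑_j r^(l)_j = S_c(x) − S_c(x̄); in particular the input attributions sum to S_c(x) − S_c(x̄). -/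
/-- **DeepLIFT (Rescale) satisfies Completeness (Summation to Delta) at every layer.**
For a feedforward network with `L = M + 1 ≥ 1` layers, input `x`, baseline `x̄`, target
unit `c`, and `z^(l)_j ≠ z̄^(l)_j` for all `l = 1, …, L` and all `j`, the DeepLIFT
(Rescale) relevances satisfy, for every `l = 0, …, L`,
`∑_j r^(l)_j = S_c(x) - S_c(x̄)`; in particular `∑_i r^(0)_i = S_c(x) - S_c(x̄)`. -/
theorem deeplift_completeness
    (M : ℕ) (n : ℕ → ℕ)
    (W : ∀ l, Fin (n (l + 1)) → Fin (n l) → ℝ)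
    (b : ∀ l, Fin (n (l + 1)) → ℝ)
    (f : ℝ → ℝ) (x0 xb : Fin (n 0) → ℝ)
    (c : Fin (n (M + 1)))
    -- `z^(l)_j ≠ z̄^(l)_j` for all `l = 1, …, L` and all `j`
    (hz : ∀ l, l < M + 1 → ∀ j : Fin (n (l + 1)),
      preact n W b f x0 l j ≠ preact n W b f xb l j)
    -- DeepLIFT (Rescale) relevances
    (r : ∀ l, Fin (n l) → ℝ)
    (hrTop : ∀ j : Fin (n (M + 1)),
      r (M + 1) j = if j = c then fwd n W b f x0 (M + 1) j - fwd n W b f xb (M + 1) j else 0)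
    (hrRec : ∀ l, l < M + 1 → ∀ j : Fin (n l),
      r l j = ∑ k, (W l k j * (fwd n W b f x0 l j - fwd n W b f xb l j) /
        (preact n W b f x0 l k - preact n W b f xb l k)) * r (l + 1) k) :
    ∀ l, l ≤ M + 1 →
      ∑ j, r l j = fwd n W b f x0 (M + 1) c - fwd n W b f xb (M + 1) c := by

  have key : ∀ l, l < M + 1 → ∑ j, r l j = ∑ k, r (l + 1) k := by
    intro l h
    have : ∑ j, r l j = ∑ k, ∑ j, (W l k j * (fwd n W b f x0 l j - fwd n W b f xb l j) /
        (preact n W b f x0 l k - preact n W b f xb l k)) * r (l + 1) k := by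
      rw [Finset.sum_comm]
      exact Finset.sum_congr rfl fun j _ => hrRec l h j
    rw [this]
    refine Finset.sum_congr rfl fun k _ => ?_
    have hz' : preact n W b f x0 l k - preact n W b f xb l k ≠ 0 :=
      sub_ne_zero.mpr (hz l h k)
    rw [← Finset.sum_mul]
    have hsum : ∑ j, W l k j * (fwd n W b f x0 l j - fwd n W b f xb l j) /
        (preact n W b f x0 l k - preact n W b f xb l k) = 1 := by
      rw [← Finset.sum_div]
      have : ∑ j, W l k j * (fwd n W b f x0 l j - fwd n W b f xb l j) =
          preact n W b f x0 l k - preact n W b f xb l k := by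
        simp only [preact, mul_sub, Finset.sum_sub_distrib]
        ring
      rw [this, div_self hz']
    rw [hsum, one_mul]
  have main : ∀ d l, l + d = M + 1 → ∑ j, r l j =
      fwd n W b f x0 (M + 1) c - fwd n W b f xb (M + 1) c := by
    intro d
    induction d with
    | zero =>
      intro l hl
      simp only [Nat.add_zero] at hl
      subst hl
      simp [hrTop]
    | succ d ih =>
      intro l hl
      rw [key l (by omega)]
      exact ih (l + 1) (by omega)
  intro l hl
  exact main (M + 1 - l) l (by omega)
end
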